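/- arXiv:math/0701341 — 5 statements merged into one kernel-verified Lean document; each statement's English description precedes it below -/
import Mathlib

section
/- Let T > 0, α > 0 and n > 1 be real constants, let δ : [0,T] → ℝ be continuous and nonnegative, and let y : [0,T] → ℝ be differentiable, positive on [0,T], with y(0) = y₀ > 0 and satisfying the differential inequality y'(t) ≤ δ(t) + α·y(t)^n for all t ∈ [0,T]. Set η = y₀ + ∫₀^T δ(s) ds. If η < (1/((n-1)·α·T))^{1/(n-1)}, then for every t ∈ [0,T] one has y(t) ≤ η / (1 - (n-1)·α·T·η^{n-1})^{1/(n-1)}; in particular y remains bounded on [0,T]. -/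
open Real Set


private lemma primA {T : ℝ} {f : ℝ → ℝ} (hf : ContinuousOn f (Icc 0 T)) {t : ℝ} (ht : t ∈ Ioo 0 T) :
    HasDerivAt (fun u => ∫ s in (0:ℝ)..u, f s) (f t) t := by
  apply intervalIntegral.integral_hasDerivAt_right
  · apply ContinuousOn.intervalIntegrable
    apply hf.mono
    rw [uIcc_of_le ht.1.le]
    exact Icc_subset_Icc le_rfl ht.2.le
  · exact (hf.mono Ioo_subset_Icc_self).stronglyMeasurableAtFilter isOpen_Ioo t ht
  · exact hf.continuousAt (Icc_mem_nhds ht.1 ht.2)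

private lemma primB {T : ℝ} (hT : 0 ≤ T) {f : ℝ → ℝ} (hf : ContinuousOn f (Icc 0 T)) :
    ContinuousOn (fun u => ∫ s in (0:ℝ)..u, f s) (Icc 0 T) := by
  have := intervalIntegral.continuousOn_primitive_interval (f := f) (a := (0:ℝ)) (b := T)
    (μ := MeasureTheory.volume) ?_
  · rwa [uIcc_of_le hT] at this
  · rw [uIcc_of_le hT]; exact hf.integrableOn_Icc

/-- ODE lemma, part (i) with explicit bound: a positive differentiable solution of
`y' ≤ δ(t) + α y^n` on `[0,T]` with `y(0) = y₀ > 0` satisfies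
`y(t) ≤ η / (1 - (n-1) α T η^(n-1))^(1/(n-1))` provided
`η = y₀ + ∫₀ᵀ δ < (1/((n-1) α T))^(1/(n-1))`. -/
theorem ode_lemma_bound
    (T α n y₀ : ℝ) (hT : 0 < T) (hα : 0 < α) (hn : 1 < n)
    (δ y y' : ℝ → ℝ)
    (hδcont : ContinuousOn δ (Icc 0 T))
    (hδnonneg : ∀ t ∈ Icc 0 T, 0 ≤ δ t)
    (hyderiv : ∀ t ∈ Icc 0 T, HasDerivWithinAt y (y' t) (Icc 0 T) t)
    (hypos : ∀ t ∈ Icc 0 T, 0 < y t)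
    (hy0 : y 0 = y₀) (hy₀pos : 0 < y₀)
    (hineq : ∀ t ∈ Icc 0 T, y' t ≤ δ t + α * y t ^ n)
    (η : ℝ) (hη : η = y₀ + ∫ s in (0:ℝ)..T, δ s)
    (hsmall : η < (1 / ((n - 1) * α * T)) ^ (1 / (n - 1))) :
    ∀ t ∈ Icc 0 T, y t ≤ η / (1 - (n - 1) * α * T * η ^ (n - 1)) ^ (1 / (n - 1)) := by
  have hn1 : 0 < n - 1 := by linarith
  have hycont : ContinuousOn y (Icc 0 T) := fun s hs => (hyderiv s hs).continuousWithinAt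
  have hgcont : ContinuousOn (fun s => y s ^ n) (Icc 0 T) :=
    hycont.rpow_const (fun s hs => Or.inl (hypos s hs).ne')
  have hδintT : 0 ≤ ∫ s in (0:ℝ)..T, δ s :=
    intervalIntegral.integral_nonneg hT.le hδnonneg
  have hηpos : 0 < η := by rw [hη]; linarith
  set Φ : ℝ → ℝ := fun u => η + α * ∫ s in (0:ℝ)..u, y s ^ n with hΦdef
  have hΦcont : ContinuousOn Φ (Icc 0 T) :=
    continuousOn_const.add (continuousOn_const.mul (primB hT.le hgcont))
  have hΦderiv : ∀ s ∈ Ioo (0:ℝ) T, HasDerivAt Φ (α * y s ^ n) s := by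
    intro s hs
    simpa [hΦdef] using ((primA hgcont hs).const_mul α).const_add η
  -- Step 1: y ≤ Φ on [0,T]
  have key1 : ∀ s ∈ Icc 0 T, y s ≤ Φ s := by
    intro s hs
    set ψ : ℝ → ℝ := fun u =>
      y u - (y₀ + (∫ v in (0:ℝ)..u, δ v) + α * ∫ v in (0:ℝ)..u, y v ^ n) with hψdef
    have hψanti : AntitoneOn ψ (Icc 0 T) := by
      apply antitoneOn_of_hasDerivWithinAt_nonpos (convex_Icc 0 T)
        (f' := fun u => y' u - (δ u + α * y u ^ n))
      · exact hycont.sub ((continuousOn_const.add (primB hT.le hδcont)).add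
          (continuousOn_const.mul (primB hT.le hgcont)))
      · intro x hx
        rw [interior_Icc] at hx ⊢
        have h1 : HasDerivAt (fun u => (y₀ + ∫ v in (0:ℝ)..u, δ v)
            + α * ∫ v in (0:ℝ)..u, y v ^ n) (δ x + α * y x ^ n) x :=
          ((primA hδcont hx).const_add y₀).add ((primA hgcont hx).const_mul α)
        exact ((hyderiv x (Ioo_subset_Icc_self hx)).mono Ioo_subset_Icc_self).sub
          (h1.hasDerivWithinAt)
      · intro x hx
        rw [interior_Icc] at hx
        have := hineq x (Ioo_subset_Icc_self hx)
        linarith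
    have h0 : ψ 0 = 0 := by simp [hψdef, hy0]
    have hle : ψ s ≤ 0 := by
      rw [← h0]
      exact hψanti (left_mem_Icc.2 hT.le) hs hs.1
    have hδmono : (∫ v in (0:ℝ)..s, δ v) ≤ ∫ v in (0:ℝ)..T, δ v := by
      have i1 : IntervalIntegrable δ MeasureTheory.volume 0 s := by
        apply ContinuousOn.intervalIntegrable
        apply hδcont.mono; rw [uIcc_of_le hs.1]; exact Icc_subset_Icc le_rfl hs.2
      have i2 : IntervalIntegrable δ MeasureTheory.volume s T := by
        apply ContinuousOn.intervalIntegrable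
        apply hδcont.mono; rw [uIcc_of_le hs.2]; exact Icc_subset_Icc hs.1 le_rfl
      have hsplit := intervalIntegral.integral_add_adjacent_intervals i1 i2
      have h2 : 0 ≤ ∫ v in s..T, δ v :=
        intervalIntegral.integral_nonneg hs.2 (fun u hu =>
          hδnonneg u ⟨le_trans hs.1 hu.1, hu.2⟩)
      linarith [hsplit]
    have : y s ≤ y₀ + (∫ v in (0:ℝ)..s, δ v) + α * ∫ v in (0:ℝ)..s, y v ^ n := by
      have := hle; simp only [hψdef] at this; linarith
    calc y s ≤ y₀ + (∫ v in (0:ℝ)..s, δ v) + α * ∫ v in (0:ℝ)..s, y v ^ n := this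
      _ ≤ Φ s := by simp only [hΦdef, hη]; linarith
  have hΦpos : ∀ s ∈ Icc 0 T, 0 < Φ s := fun s hs => lt_of_lt_of_le (hypos s hs) (key1 s hs)
  -- Step 2: χ = Φ^(1-n) + (n-1)αt is monotone
  have key2 : ∀ s ∈ Icc 0 T, η ^ (1 - n) ≤ Φ s ^ (1 - n) + (n - 1) * α * s := by
    have hχmono : MonotoneOn (fun u => Φ u ^ (1 - n) + (n - 1) * α * u) (Icc 0 T) := by
      apply monotoneOn_of_hasDerivWithinAt_nonneg (convex_Icc 0 T)
        (f' := fun u => (α * y u ^ n) * (1 - n) * Φ u ^ (1 - n - 1) + (n - 1) * α)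
      · exact (hΦcont.rpow_const (fun s hs => Or.inl (hΦpos s hs).ne')).add
          (continuous_const.mul continuous_id).continuousOn
      · intro x hx
        rw [interior_Icc] at hx
        exact (((hΦderiv x hx).rpow_const
          (Or.inl (hΦpos x (Ioo_subset_Icc_self hx)).ne')).add
          ((hasDerivAt_id x).const_mul ((n-1)*α))).hasDerivWithinAt.congr_deriv (by ring)
      · intro x hx
        rw [interior_Icc] at hx
        have hxI := Ioo_subset_Icc_self hx
        have hΦx := hΦpos x hxI
        have hyx := hypos x hxI
        have hle : y x ^ n ≤ Φ x ^ n :=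
          Real.rpow_le_rpow hyx.le (key1 x hxI) (by linarith)
        have hrw : Φ x ^ (1 - n - 1) = (Φ x ^ n)⁻¹ := by
          rw [show (1 : ℝ) - n - 1 = -n by ring, Real.rpow_neg hΦx.le]
        have hΦn : 0 < Φ x ^ n := Real.rpow_pos_of_pos hΦx n
        have hq : (Φ x ^ n)⁻¹ * y x ^ n ≤ 1 := by
          rw [inv_mul_le_iff₀ hΦn, mul_one]; exact hle
        have hyn : 0 < y x ^ n := Real.rpow_pos_of_pos hyx n
        rw [hrw]
        nlinarith [mul_le_mul_of_nonneg_left hq (by positivity : (0:ℝ) ≤ (n-1)*α), hyn, hΦn]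
    intro s hs
    have := hχmono (left_mem_Icc.2 hT.le) hs hs.1
    have hΦ0 : Φ 0 = η := by simp [hΦdef]
    simp only [hΦ0] at this
    linarith
  -- Step 3: conclusion
  intro t ht
  set K : ℝ := (n - 1) * α * T * η ^ (n - 1) with hKdef
  have hηn : 0 < η ^ (n - 1) := Real.rpow_pos_of_pos hηpos _
  have hMpos : 0 < (n - 1) * α * T := by positivity
  have hK1 : K < 1 := by
    have h1 : η ^ (n - 1) < ((1 / ((n - 1) * α * T)) ^ (1 / (n - 1))) ^ (n - 1) :=
      Real.rpow_lt_rpow hηpos.le hsmall hn1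
    have h2 : ((1 / ((n - 1) * α * T)) ^ (1 / (n - 1))) ^ (n - 1)
        = 1 / ((n - 1) * α * T) := by
      rw [← Real.rpow_mul (by positivity), one_div_mul_cancel hn1.ne', Real.rpow_one]
    rw [h2] at h1
    rw [hKdef]
    calc (n - 1) * α * T * η ^ (n - 1)
        < (n - 1) * α * T * (1 / ((n - 1) * α * T)) := by
          exact (mul_lt_mul_iff_right₀ hMpos).2 h1
      _ = 1 := by field_simp
  have hK0 : 0 < 1 - K := by linarith
  -- Φ t ^ (1-n) ≥ (η^(n-1))⁻¹ * (1 - K) =: c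
  have hη1n : η ^ (1 - n) = (η ^ (n - 1))⁻¹ := by
    rw [show (1:ℝ) - n = -(n - 1) by ring, Real.rpow_neg hηpos.le]
  have hc : (η ^ (n - 1))⁻¹ * (1 - K) ≤ Φ t ^ (1 - n) := by
    have h := key2 t ht
    rw [hη1n] at h
    have ht' : (n - 1) * α * t ≤ (n - 1) * α * T := by
      have : 0 < (n-1)*α := by positivity
      exact (mul_le_mul_iff_right₀ this).2 ht.2
    have hexp : (η ^ (n - 1))⁻¹ * (1 - K) = (η ^ (n - 1))⁻¹ - (n - 1) * α * T := by
      rw [hKdef]; field_simp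
    rw [hexp]; linarith
  have hcpos : 0 < (η ^ (n - 1))⁻¹ * (1 - K) := by positivity
  have hΦt := hΦpos t ht
  have hΦ1n : Φ t ^ (1 - n) = (Φ t ^ (n - 1))⁻¹ := by
    rw [show (1:ℝ) - n = -(n - 1) by ring, Real.rpow_neg hΦt.le]
  have hΦn1 : 0 < Φ t ^ (n - 1) := Real.rpow_pos_of_pos hΦt _
  have hΦle : Φ t ^ (n - 1) ≤ ((η ^ (n - 1))⁻¹ * (1 - K))⁻¹ := by
    rw [hΦ1n] at hc
    rw [← inv_inv (Φ t ^ (n-1))]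
    exact inv_anti₀ hcpos hc
  have hfin : Φ t ≤ (((η ^ (n - 1))⁻¹ * (1 - K))⁻¹) ^ (1 / (n - 1)) := by
    have h1 : (Φ t ^ (n - 1)) ^ (1 / (n - 1)) = Φ t := by
      rw [← Real.rpow_mul hΦt.le, mul_one_div_cancel hn1.ne', Real.rpow_one]
    rw [← h1]
    exact Real.rpow_le_rpow hΦn1.le hΦle (by positivity)
  have hrhs : (((η ^ (n - 1))⁻¹ * (1 - K))⁻¹) ^ (1 / (n - 1))
      = η / (1 - K) ^ (1 / (n - 1)) := by
    rw [mul_inv, inv_inv, Real.mul_rpow hηn.le (by positivity),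
      ← Real.rpow_mul hηpos.le, mul_one_div_cancel hn1.ne', Real.rpow_one,
      Real.inv_rpow hK0.le]
    ring
  rw [hrhs] at hfin
  exact le_trans (key1 t ht) hfin
end

section
/- Let T > 0, α > 0 and n > 1 be real constants. For every ε > 0 there exists η₀ > 0 with the following property: whenever δ : [0,T] → ℝ is continuous and nonnegative and y : [0,T] → ℝ is differentiable, positive on [0,T], satisfies y'(t) ≤ δ(t) + α·y(t)^n for all t ∈ [0,T], and η := y(0) + ∫₀^T δ(s) ds satisfies 0 < η ≤ η₀, then y(t) ≤ ε for all t ∈ [0,T]. That is, y tends to 0 uniformly on [0,T] as η → 0, uniformly over all solutions of the differential inequality. -/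
open Real Set

/-- ODE lemma, part (ii): uniformly over all solutions of the differential inequality
`y' ≤ δ(t) + α y^n` on `[0,T]`, we have `y → 0` uniformly on `[0,T]` as
`η = y(0) + ∫₀ᵀ δ → 0`. -/
theorem ode_lemma_uniform_smallness
    (T α n : ℝ) (hT : 0 < T) (hα : 0 < α) (hn : 1 < n) :
    ∀ ε > (0:ℝ), ∃ η₀ > (0:ℝ),
      ∀ (δ y y' : ℝ → ℝ),
        ContinuousOn δ (Icc 0 T) →
        (∀ t ∈ Icc 0 T, 0 ≤ δ t) →
        (∀ t ∈ Icc 0 T, HasDerivWithinAt y (y' t) (Icc 0 T) t) →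
        (∀ t ∈ Icc 0 T, 0 < y t) →
        (∀ t ∈ Icc 0 T, y' t ≤ δ t + α * y t ^ n) →
        0 < y 0 + ∫ s in (0:ℝ)..T, δ s →
        y 0 + (∫ s in (0:ℝ)..T, δ s) ≤ η₀ →
        ∀ t ∈ Icc 0 T, y t ≤ ε := by
  intro ε hε
  have hn1 : (0:ℝ) < n - 1 := by linarith
  obtain ⟨P, hP⟩ : ∃ P : ℝ, P = (1 / (2 * α * T)) ^ ((n - 1)⁻¹) := ⟨_, rfl⟩
  have hPpos : 0 < P := hP ▸ Real.rpow_pos_of_pos (by positivity) _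
  obtain ⟨M, hM⟩ : ∃ M : ℝ, M = min ε P := ⟨_, rfl⟩
  have hMpos : 0 < M := hM ▸ lt_min hε hPpos
  have hMε : M ≤ ε := hM ▸ min_le_left _ _
  have hMP : M ≤ P := hM ▸ min_le_right _ _
  -- key estimate : α * M ^ n * T ≤ M / 2
  have hMn1 : M ^ (n - 1) ≤ 1 / (2 * α * T) := by
    calc M ^ (n - 1) ≤ P ^ (n - 1) :=
          Real.rpow_le_rpow hMpos.le hMP hn1.le
      _ = (1 / (2 * α * T)) ^ ((n - 1)⁻¹ * (n - 1)) := by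
          rw [hP, Real.rpow_mul (by positivity)]
      _ = 1 / (2 * α * T) := by
          rw [inv_mul_cancel₀ hn1.ne', Real.rpow_one]
  have hMn : M ^ n = M ^ (n - 1) * M := by
    rw [← Real.rpow_add_one hMpos.ne' (n - 1)]
    norm_num
  have hMnpos : 0 < M ^ n := Real.rpow_pos_of_pos hMpos n
  have hkey : α * M ^ n * T ≤ M / 2 := by
    rw [hMn]
    have h1 : α * T * M ^ (n - 1) ≤ α * T * (1 / (2 * α * T)) :=
      mul_le_mul_of_nonneg_left hMn1 (by positivity)
    have h2 : α * T * (1 / (2 * α * T)) = 1 / 2 := by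
      field_simp
    nlinarith [Real.rpow_pos_of_pos hMpos (n - 1)]
  refine ⟨M / 4, by positivity, ?_⟩
  intro δ y y' hδc hδ0 hyd hypos hineq hηpos hη
  -- the barrier function
  obtain ⟨K, hK⟩ : ∃ K : ℝ, K = α * M ^ n + M / (4 * T) := ⟨_, rfl⟩
  have hKpos : 0 < K := by rw [hK]; positivity
  obtain ⟨B, hBdef⟩ : ∃ B : ℝ → ℝ, B = fun t => y 0 + (∫ s in (0:ℝ)..t, δ s) + K * t := ⟨_, rfl⟩
  have hδint : IntervalIntegrable δ MeasureTheory.volume 0 T := by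
    have h : ContinuousOn δ (uIcc 0 T) := by rwa [uIcc_of_le hT.le]
    exact h.intervalIntegrable
  -- B is bounded by M on [0, T]
  have hBle : ∀ x ∈ Icc 0 T, B x ≤ M := by
    intro x hx
    have hint : (∫ s in (0:ℝ)..x, δ s) ≤ ∫ s in (0:ℝ)..T, δ s := by
      apply intervalIntegral.integral_mono_interval le_rfl hx.1 hx.2 ?_ hδint
      filter_upwards [MeasureTheory.ae_restrict_mem measurableSet_Ioc] with s hs
      exact hδ0 s ⟨hs.1.le, hs.2⟩
    have hKx : K * x ≤ K * T := mul_le_mul_of_nonneg_left hx.2 hKpos.le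
    have hKT : K * T = α * M ^ n * T + M / 4 := by
      rw [hK]; field_simp
    have hη' : y 0 + (∫ s in (0:ℝ)..T, δ s) ≤ M / 4 := hη
    simp only [hBdef]
    linarith
  -- derivative of B from the right
  have hBd : ∀ x ∈ Ico 0 T, HasDerivWithinAt B (δ x + K) (Ici x) x := by
    intro x hx
    have hmemIci : Icc (0:ℝ) T ∈ nhdsWithin x (Ici x) := Icc_mem_nhdsGE_of_mem hx
    have hmemIoi : Icc (0:ℝ) T ∈ nhdsWithin x (Ioi x) := Icc_mem_nhdsGT_of_mem hx
    have hδx : IntervalIntegrable δ MeasureTheory.volume 0 x :=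
      hδint.mono_set (by rw [uIcc_of_le hx.1, uIcc_of_le hT.le]; exact Icc_subset_Icc le_rfl hx.2.le)
    have hmeas : StronglyMeasurableAtFilter δ (nhdsWithin x (Ioi x)) :=
      ⟨Icc 0 T, hmemIoi, (hδc.aestronglyMeasurable measurableSet_Icc)⟩
    have hcont : ContinuousWithinAt δ (Ioi x) x :=
      (hδc.continuousWithinAt ⟨hx.1, hx.2.le⟩).mono_of_mem_nhdsWithin hmemIoi
    have h1 : HasDerivWithinAt (fun u => ∫ s in (0:ℝ)..u, δ s) (δ x) (Ici x) x :=
      intervalIntegral.integral_hasDerivWithinAt_right hδx hmeas hcont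
    have h2 : HasDerivWithinAt (fun u => K * u) K (Ici x) x := by
      simpa using ((hasDerivAt_id x).const_mul K).hasDerivWithinAt
    rw [hBdef]; exact ((h1.const_add (y 0)).add h2)
  -- continuity of B on [0, T]
  have hBc : ContinuousOn B (Icc 0 T) := by
    have : ContinuousOn (fun u => ∫ s in (0:ℝ)..u, δ s) (Icc 0 T) := by
      have := intervalIntegral.continuousOn_primitive_interval
        (f := δ) (μ := MeasureTheory.volume) (a := (0:ℝ)) (b := T)
        (by rw [uIcc_of_le hT.le]; exact hδc.integrableOn_compact isCompact_Icc)
      rwa [uIcc_of_le hT.le] at this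
    rw [hBdef]
    exact (continuousOn_const.add this).add ((continuous_const.mul continuous_id').continuousOn)
  -- continuity of y and right derivatives
  have hyc : ContinuousOn y (Icc 0 T) := fun t ht => (hyd t ht).continuousWithinAt
  have hyd' : ∀ x ∈ Ico 0 T, HasDerivWithinAt y (y' x) (Ici x) x := by
    intro x hx
    exact (hyd x ⟨hx.1, hx.2.le⟩).mono_of_mem_nhdsWithin (Icc_mem_nhdsGE_of_mem hx)
  -- the fencing theorem
  have hB0 : y 0 ≤ B 0 := by
    simp only [hBdef]
    simp [intervalIntegral.integral_same]
  have bound : ∀ x ∈ Ico 0 T, y x = B x → y' x < δ x + K := by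
    intro x hx hxB
    have hxIcc : x ∈ Icc 0 T := ⟨hx.1, hx.2.le⟩
    have hyM : y x ≤ M := hxB ▸ hBle x hxIcc
    have : α * y x ^ n ≤ α * M ^ n := by
      apply mul_le_mul_of_nonneg_left _ hα.le
      exact Real.rpow_le_rpow (hypos x hxIcc).le hyM (by linarith)
    have hc : 0 < M / (4 * T) := by positivity
    calc y' x ≤ δ x + α * y x ^ n := hineq x hxIcc
      _ ≤ δ x + α * M ^ n := by linarith
      _ < δ x + K := by rw [hK]; linarith
  have hfence := image_le_of_deriv_right_lt_deriv_boundary' hyc hyd' hB0 hBc hBd bound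
  intro t ht
  exact le_trans (hfence ht) (le_trans (hBle t ht) hMε)
end

section
/- Let T > 0, α > 0 and n > 1 be real constants and let δ : [0,T] → ℝ be continuous and nonnegative. Suppose y : [0,T] → ℝ is differentiable, positive on [0,T], with y(0) = y₀ > 0 and y'(t) ≤ δ(t) + α·y(t)^n for all t ∈ [0,T], and suppose z : [0,T] → ℝ is differentiable, positive and bounded on [0,T], with z(0) = y₀ + ∫₀^T δ(s) ds and z'(t) = α·z(t)^n for all t ∈ [0,T]. Then y(t) ≤ z(t) for every t ∈ [0,T]. In particular, any solution of the differential inequality with forcing δ is dominated on [0,T] by the solution of the unforced equation z' = α·z^n whose initial value is inflated by the total integral of δ. -/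
open Real Set

/-- Comparison: a solution of the forced differential inequality `y' ≤ δ(t) + α y^n`
is dominated on `[0,T]` by the solution of the unforced equation `z' = α z^n`
whose initial value is inflated by the total integral of `δ`. -/
theorem ode_lemma_comparison
    (T α n y₀ : ℝ) (hT : 0 < T) (hα : 0 < α) (hn : 1 < n)
    (δ y y' z z' : ℝ → ℝ)
    (hδcont : ContinuousOn δ (Icc 0 T))
    (hδnonneg : ∀ t ∈ Icc 0 T, 0 ≤ δ t)
    (hyderiv : ∀ t ∈ Icc 0 T, HasDerivWithinAt y (y' t) (Icc 0 T) t)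
    (hypos : ∀ t ∈ Icc 0 T, 0 < y t)
    (hy0 : y 0 = y₀) (hy₀pos : 0 < y₀)
    (hyineq : ∀ t ∈ Icc 0 T, y' t ≤ δ t + α * y t ^ n)
    (hzderiv : ∀ t ∈ Icc 0 T, HasDerivWithinAt z (z' t) (Icc 0 T) t)
    (hzpos : ∀ t ∈ Icc 0 T, 0 < z t)
    (hzbdd : ∃ M, ∀ t ∈ Icc 0 T, z t ≤ M)
    (hz0 : z 0 = y₀ + ∫ s in (0:ℝ)..T, δ s)
    (hzeq : ∀ t ∈ Icc 0 T, z' t = α * z t ^ n) :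
    ∀ t ∈ Icc 0 T, y t ≤ z t := by
  set K : ℝ := ∫ s in (0:ℝ)..T, δ s with hK
  have hδintT : IntervalIntegrable δ MeasureTheory.volume 0 T := by
    have h : ContinuousOn δ (uIcc 0 T) := by rwa [uIcc_of_le hT.le]
    exact h.intervalIntegrable
  have hδint : ∀ t ∈ Icc 0 T, IntervalIntegrable δ MeasureTheory.volume 0 t := fun t ht =>
    hδintT.mono_set (by rw [uIcc_of_le ht.1, uIcc_of_le hT.le]; exact Icc_subset_Icc le_rfl ht.2)
  -- the auxiliary function u
  set u : ℝ → ℝ := fun t => y t + (K - ∫ s in (0:ℝ)..t, δ s) with hu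
  -- remaining mass of δ is nonnegative
  have hrem : ∀ t ∈ Icc 0 T, 0 ≤ K - ∫ s in (0:ℝ)..t, δ s := by
    intro t ht
    have hsub : uIcc t T ⊆ uIcc (0:ℝ) T := by
      rw [uIcc_of_le ht.2, uIcc_of_le hT.le]
      exact Icc_subset_Icc ht.1 le_rfl
    have hsplit : (∫ s in (0:ℝ)..t, δ s) + (∫ s in t..T, δ s) = K :=
      intervalIntegral.integral_add_adjacent_intervals (hδint t ht)
        (hδintT.mono_set hsub)
    have hnn : 0 ≤ ∫ s in t..T, δ s := by
      apply intervalIntegral.integral_nonneg ht.2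
      intro s hs
      exact hδnonneg s ⟨le_trans ht.1 hs.1, hs.2⟩
    linarith
  have hyu : ∀ t ∈ Icc 0 T, y t ≤ u t := fun t ht => by
    have := hrem t ht; simp only [hu]; linarith
  have hupos : ∀ t ∈ Icc 0 T, 0 < u t := fun t ht =>
    lt_of_lt_of_le (hypos t ht) (hyu t ht)
  have hu0 : u 0 = z 0 := by
    simp [hu, intervalIntegral.integral_same, hy0, hz0]
  -- derivative of u
  have huderiv : ∀ t ∈ Icc 0 T, HasDerivWithinAt u (y' t - δ t) (Icc 0 T) t := by
    intro t ht
    haveI : Fact (t ∈ Icc (0:ℝ) T) := ⟨ht⟩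
    have hC : HasDerivWithinAt (fun x => ∫ s in (0:ℝ)..x, δ s) (δ t) (Icc 0 T) t :=
      intervalIntegral.integral_hasDerivWithinAt_right (hδint t ht)
        (hδcont.stronglyMeasurableAtFilter_nhdsWithin measurableSet_Icc t) (hδcont t ht)
    have := (hyderiv t ht).add ((hasDerivWithinAt_const t _ K).sub hC)
    exact this.congr_deriv (by ring)
  -- u satisfies the differential inequality
  have huineq : ∀ t ∈ Icc 0 T, y' t - δ t ≤ α * u t ^ n := by
    intro t ht
    have h1 : y t ^ n ≤ u t ^ n :=
      Real.rpow_le_rpow (hypos t ht).le (hyu t ht) (by linarith)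
    have := hyineq t ht
    nlinarith
  -- the function φ
  set φ : ℝ → ℝ := fun t => u t ^ (1 - n) - z t ^ (1 - n) with hφ
  set φ' : ℝ → ℝ := fun t =>
    (y' t - δ t) * (1 - n) * u t ^ (1 - n - 1) - z' t * (1 - n) * z t ^ (1 - n - 1) with hφ'
  have hφderiv : ∀ t ∈ Icc 0 T, HasDerivWithinAt φ (φ' t) (Icc 0 T) t := by
    intro t ht
    exact ((huderiv t ht).rpow_const (Or.inl (hupos t ht).ne')).sub
      ((hzderiv t ht).rpow_const (Or.inl (hzpos t ht).ne'))
  have hφ'nonneg : ∀ t ∈ Icc 0 T, 0 ≤ φ' t := by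
    intro t ht
    have hun : (0:ℝ) < u t ^ (1 - n - 1) := Real.rpow_pos_of_pos (hupos t ht) _
    have hzn : (0:ℝ) < z t ^ (1 - n - 1) := Real.rpow_pos_of_pos (hzpos t ht) _
    -- z term equals α * (1 - n)
    have hzterm : z' t * (1 - n) * z t ^ (1 - n - 1) = α * (1 - n) := by
      rw [hzeq t ht]
      have : z t ^ n * z t ^ (1 - n - 1) = 1 := by
        rw [← Real.rpow_add (hzpos t ht)]
        norm_num
      calc α * z t ^ n * (1 - n) * z t ^ (1 - n - 1)
          = α * (1 - n) * (z t ^ n * z t ^ (1 - n - 1)) := by ring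
        _ = α * (1 - n) := by rw [this, mul_one]
    -- u term is ≥ α * (1 - n)
    have huterm : α * (1 - n) ≤ (y' t - δ t) * (1 - n) * u t ^ (1 - n - 1) := by
      have hne : u t ^ n * u t ^ (1 - n - 1) = 1 := by
        rw [← Real.rpow_add (hupos t ht)]
        norm_num
      have hineq := huineq t ht
      have hfac : (1 - n) * u t ^ (1 - n - 1) ≤ 0 := by
        apply mul_nonpos_of_nonpos_of_nonneg (by linarith) hun.le
      have := mul_le_mul_of_nonpos_right hineq hfac
      calc α * (1 - n) = α * u t ^ n * ((1 - n) * u t ^ (1 - n - 1)) := by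
            rw [show α * u t ^ n * ((1 - n) * u t ^ (1 - n - 1))
                = α * (1 - n) * (u t ^ n * u t ^ (1 - n - 1)) by ring, hne, mul_one]
        _ ≤ (y' t - δ t) * ((1 - n) * u t ^ (1 - n - 1)) := this
        _ = (y' t - δ t) * (1 - n) * u t ^ (1 - n - 1) := by ring
    simp only [hφ']
    linarith
  -- φ is monotone on Icc 0 T
  have hφmono : MonotoneOn φ (Icc 0 T) := by
    apply monotoneOn_of_deriv_nonneg (convex_Icc 0 T)
      (fun t ht => (hφderiv t ht).continuousWithinAt)
    · intro t ht
      rw [interior_Icc] at ht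
      have hmem : Icc (0:ℝ) T ∈ nhds t := Icc_mem_nhds ht.1 ht.2
      exact ((hφderiv t (Ioo_subset_Icc_self ht)).hasDerivAt hmem).differentiableAt.differentiableWithinAt
    · intro t ht
      rw [interior_Icc] at ht
      have hmem : Icc (0:ℝ) T ∈ nhds t := Icc_mem_nhds ht.1 ht.2
      rw [((hφderiv t (Ioo_subset_Icc_self ht)).hasDerivAt hmem).deriv]
      exact hφ'nonneg t (Ioo_subset_Icc_self ht)
  -- conclude
  intro t ht
  have hφ0 : φ 0 = 0 := by simp [hφ, hu0]
  have h0mem : (0:ℝ) ∈ Icc (0:ℝ) T := ⟨le_rfl, hT.le⟩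
  have hφt : 0 ≤ φ t := hφ0 ▸ hφmono h0mem ht ht.1
  have huz : u t ≤ z t := by
    by_contra h
    push_neg at h
    have := Real.rpow_lt_rpow_of_neg (hzpos t ht) h (by linarith : 1 - n < 0)
    simp only [hφ] at hφt
    linarith
  exact le_trans (hyu t ht) huz
end

section
/- Let T > 0, α > 0 and n > 1 be real constants, let a : [0,T] → ℝ and δ : [0,T] → ℝ be continuous and nonnegative, and let y : [0,T] → ℝ be differentiable, positive on [0,T], with y(0) = y₀ > 0 and y'(t) ≤ a(t)·y(t) + α·y(t)^n + δ(t) for all t ∈ [0,T]. Set β(T) = ∫₀^T a(s) ds. If y₀ + ∫₀^T δ(s) ds < (1/((n-1)·α·T))^{1/(n-1)} · exp(-β(T)), then y remains bounded on [0,T]; explicitly, writing η = y₀ + ∫₀^T δ(s) ds, one has y(t) ≤ exp(β(T)) · η / (1 - (n-1)·α·exp((n-1)·β(T))·T·η^{n-1})^{1/(n-1)} for all t ∈ [0,T]. -/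
open Real Set
open MeasureTheory intervalIntegral


private lemma ftc_icc' {T : ℝ} {f : ℝ → ℝ} (hf : ContinuousOn f (Icc 0 T)) {t : ℝ}
    (ht : t ∈ Icc 0 T) :
    HasDerivWithinAt (fun u => ∫ s in (0:ℝ)..u, f s) (f t) (Icc 0 T) t := by
  haveI : Fact (t ∈ Icc (0:ℝ) T) := ⟨ht⟩
  have hint : IntervalIntegrable f volume 0 t := by
    apply ContinuousOn.intervalIntegrable
    apply hf.mono
    rw [uIcc_of_le ht.1]
    exact Icc_subset_Icc le_rfl ht.2
  exact integral_hasDerivWithinAt_right hint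
    (hf.stronglyMeasurableAtFilter_nhdsWithin measurableSet_Icc t)
    (hf t ht)

private lemma le_of_deriv_le' {T : ℝ} (hT : 0 ≤ T) {f g f' g' : ℝ → ℝ}
    (hf : ∀ t ∈ Icc 0 T, HasDerivWithinAt f (f' t) (Icc 0 T) t)
    (hg : ∀ t ∈ Icc 0 T, HasDerivWithinAt g (g' t) (Icc 0 T) t)
    (h0 : f 0 ≤ g 0)
    (hle : ∀ t ∈ Icc 0 T, f' t ≤ g' t) :
    ∀ t ∈ Icc 0 T, f t ≤ g t := by
  have hmono : MonotoneOn (fun t => g t - f t) (Icc 0 T) := by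
    apply monotoneOn_of_deriv_nonneg (convex_Icc 0 T)
    · exact fun t ht => ((hg t ht).sub (hf t ht)).continuousWithinAt
    · intro x hx
      rw [interior_Icc] at hx
      exact (((hg x (Ioo_subset_Icc_self hx)).sub (hf x (Ioo_subset_Icc_self hx))).hasDerivAt
        (Icc_mem_nhds hx.1 hx.2)).differentiableAt.differentiableWithinAt
    · intro x hx
      rw [interior_Icc] at hx
      have hx' := Ioo_subset_Icc_self hx
      have hd := ((hg x hx').sub (hf x hx')).hasDerivAt (Icc_mem_nhds hx.1 hx.2)
      rw [show deriv (fun t => g t - f t) x = g' x - f' x from hd.deriv]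
      exact sub_nonneg.2 (hle x hx')
  intro t ht
  have := hmono (left_mem_Icc.2 hT) ht ht.1
  simp only at this
  linarith

private lemma ii_sub' {T t u : ℝ} {f : ℝ → ℝ} (hf : ContinuousOn f (Icc 0 T))
    (ht : t ∈ Icc 0 T) (hu : u ∈ Icc 0 T) (htu : t ≤ u) :
    IntervalIntegrable f volume t u := by
  apply ContinuousOn.intervalIntegrable
  apply hf.mono; rw [uIcc_of_le htu]; exact Icc_subset_Icc ht.1 hu.2

private lemma integral_le_integral' {T t : ℝ} {f : ℝ → ℝ} (hf : ContinuousOn f (Icc 0 T))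
    (hnn : ∀ s ∈ Icc 0 T, 0 ≤ f s) (ht : t ∈ Icc 0 T) :
    (∫ s in (0:ℝ)..t, f s) ≤ ∫ s in (0:ℝ)..T, f s := by
  have h1 : IntervalIntegrable f volume 0 t :=
    ii_sub' hf (left_mem_Icc.2 (ht.1.trans ht.2)) ht ht.1
  have h2 : IntervalIntegrable f volume t T := ii_sub' hf ht (right_mem_Icc.2 (ht.1.trans ht.2)) ht.2
  have hsplit : (∫ s in (0:ℝ)..t, f s) + ∫ s in t..T, f s = ∫ s in (0:ℝ)..T, f s :=
    integral_add_adjacent_intervals h1 h2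
  have hpos : 0 ≤ ∫ s in t..T, f s :=
    integral_nonneg ht.2 (fun u hu => hnn u ⟨ht.1.trans hu.1, hu.2⟩)
  linarith

private lemma integral_nonneg_icc' {T t : ℝ} {f : ℝ → ℝ}
    (hnn : ∀ s ∈ Icc 0 T, 0 ≤ f s) (ht : t ∈ Icc 0 T) :
    0 ≤ ∫ s in (0:ℝ)..t, f s :=
  integral_nonneg ht.1 (fun u hu => hnn u ⟨hu.1, hu.2.trans ht.2⟩)

/-- Linearly-weighted form of the ODE lemma: if `y' ≤ a(t) y + α y^n + δ(t)` on `[0,T]`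
and `y₀ + ∫₀ᵀ δ < (1/((n-1) α T))^(1/(n-1)) · exp(-β(T))` where `β(T) = ∫₀ᵀ a`, then
`y(t) ≤ exp(β(T)) η / (1 - (n-1) α exp((n-1) β(T)) T η^(n-1))^(1/(n-1))` on `[0,T]`,
with `η = y₀ + ∫₀ᵀ δ`. -/
theorem ode_lemma_weighted_bound
    (T α n y₀ : ℝ) (hT : 0 < T) (hα : 0 < α) (hn : 1 < n)
    (a δ y y' : ℝ → ℝ)
    (hacont : ContinuousOn a (Icc 0 T))
    (hanonneg : ∀ t ∈ Icc 0 T, 0 ≤ a t)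
    (hδcont : ContinuousOn δ (Icc 0 T))
    (hδnonneg : ∀ t ∈ Icc 0 T, 0 ≤ δ t)
    (hyderiv : ∀ t ∈ Icc 0 T, HasDerivWithinAt y (y' t) (Icc 0 T) t)
    (hypos : ∀ t ∈ Icc 0 T, 0 < y t)
    (hy0 : y 0 = y₀) (hy₀pos : 0 < y₀)
    (hineq : ∀ t ∈ Icc 0 T, y' t ≤ a t * y t + α * y t ^ n + δ t)
    (β : ℝ) (hβ : β = ∫ s in (0:ℝ)..T, a s)
    (η : ℝ) (hη : η = y₀ + ∫ s in (0:ℝ)..T, δ s)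
    (hsmall : η < (1 / ((n - 1) * α * T)) ^ (1 / (n - 1)) * Real.exp (-β)) :
    ∀ t ∈ Icc 0 T,
      y t ≤ Real.exp β * η /
        (1 - (n - 1) * α * Real.exp ((n - 1) * β) * T * η ^ (n - 1)) ^ (1 / (n - 1)) := by
  have hTT : (0:ℝ) ≤ T := hT.le
  have h0T : (0:ℝ) ∈ Icc 0 T := left_mem_Icc.2 hTT
  have hn1 : 0 < n - 1 := by linarith
  set A : ℝ → ℝ := fun t => ∫ s in (0:ℝ)..t, a s with hAdef
  have hA : ∀ t ∈ Icc 0 T, HasDerivWithinAt A (a t) (Icc 0 T) t := fun t ht => ftc_icc' hacont ht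
  have hA0 : A 0 = 0 := intervalIntegral.integral_same
  have hAnn : ∀ t ∈ Icc 0 T, 0 ≤ A t := fun t ht => integral_nonneg_icc' hanonneg ht
  have hAle : ∀ t ∈ Icc 0 T, A t ≤ β := by
    intro t ht; rw [hβ]; exact integral_le_integral' hacont hanonneg ht
  have hβnn : 0 ≤ β := by
    rw [hβ]; exact integral_nonneg_icc' hanonneg (right_mem_Icc.2 hTT)
  set K : ℝ := Real.exp ((n - 1) * β) with hKdef
  have hKpos : 0 < K := Real.exp_pos _
  set z : ℝ → ℝ := fun t => y t * Real.exp (-(A t)) with hzdef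
  have hzpos : ∀ t ∈ Icc 0 T, 0 < z t := fun t ht => mul_pos (hypos t ht) (Real.exp_pos _)
  have hz0 : z 0 = y₀ := by simp [hzdef, hA0, hy0]
  have hz : ∀ t ∈ Icc 0 T, HasDerivWithinAt z
      (y' t * Real.exp (-(A t)) + y t * (Real.exp (-(A t)) * -(a t))) (Icc 0 T) t := by
    intro t ht
    exact (hyderiv t ht).mul (((hA t ht).neg).exp)
  have hzcont : ContinuousOn z (Icc 0 T) := fun t ht => (hz t ht).continuousWithinAt
  set g : ℝ → ℝ := fun t => α * K * z t ^ n with hgdef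
  have hgnn : ∀ t ∈ Icc 0 T, 0 ≤ g t := fun t ht =>
    (mul_pos (mul_pos hα hKpos) (Real.rpow_pos_of_pos (hzpos t ht) n)).le
  have hgcont : ContinuousOn g (Icc 0 T) := by
    apply ContinuousOn.mul continuousOn_const
    exact hzcont.rpow_const (fun t ht => Or.inl (hzpos t ht).ne')
  -- key derivative inequality for z
  have hzineq : ∀ t ∈ Icc 0 T,
      y' t * Real.exp (-(A t)) + y t * (Real.exp (-(A t)) * -(a t)) ≤ δ t + g t := by
    intro t ht
    have he : (0:ℝ) < Real.exp (-(A t)) := Real.exp_pos _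
    have he1 : Real.exp (-(A t)) ≤ 1 := Real.exp_le_one_iff.2 (by linarith [hAnn t ht])
    have h1 : y' t * Real.exp (-(A t)) + y t * (Real.exp (-(A t)) * -(a t))
        ≤ (α * y t ^ n + δ t) * Real.exp (-(A t)) := by
      nlinarith [mul_le_mul_of_nonneg_right (hineq t ht) he.le]
    have hy' : y t = z t * Real.exp (A t) := by
      simp only [hzdef]
      rw [mul_assoc, ← Real.exp_add, neg_add_cancel, Real.exp_zero, mul_one]
    have h2 : y t ^ n * Real.exp (-(A t)) = z t ^ n * Real.exp ((n - 1) * A t) := by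
      rw [hy', Real.mul_rpow (hzpos t ht).le (Real.exp_pos _).le, ← Real.exp_mul,
        mul_assoc, ← Real.exp_add]
      congr 2
      ring
    have h3 : z t ^ n * Real.exp ((n - 1) * A t) ≤ z t ^ n * K := by
      apply mul_le_mul_of_nonneg_left _ (Real.rpow_pos_of_pos (hzpos t ht) n).le
      rw [hKdef]
      exact Real.exp_le_exp.2 (mul_le_mul_of_nonneg_left (hAle t ht) hn1.le)
    have h4 : δ t * Real.exp (-(A t)) ≤ δ t :=
      mul_le_of_le_one_right (hδnonneg t ht) he1
    calc y' t * Real.exp (-(A t)) + y t * (Real.exp (-(A t)) * -(a t))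
        ≤ (α * y t ^ n + δ t) * Real.exp (-(A t)) := h1
      _ = α * (y t ^ n * Real.exp (-(A t))) + δ t * Real.exp (-(A t)) := by ring
      _ = α * (z t ^ n * Real.exp ((n - 1) * A t)) + δ t * Real.exp (-(A t)) := by rw [h2]
      _ ≤ α * (z t ^ n * K) + δ t := by
          have := mul_le_mul_of_nonneg_left h3 hα.le
          linarith
      _ = δ t + g t := by rw [hgdef]; ring
  -- w := y₀ + ∫ (δ + g)
  set w : ℝ → ℝ := fun t => y₀ + ∫ s in (0:ℝ)..t, (δ s + g s) with hwdef
  have hδgcont : ContinuousOn (fun s => δ s + g s) (Icc 0 T) := hδcont.add hgcont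
  have hw : ∀ t ∈ Icc 0 T, HasDerivWithinAt w (δ t + g t) (Icc 0 T) t := by
    intro t ht
    have h := (hasDerivWithinAt_const t _ y₀).add (ftc_icc' hδgcont ht)
    rw [zero_add] at h
    exact h
  have hw0 : w 0 = y₀ := by simp [hwdef]
  have hzw : ∀ t ∈ Icc 0 T, z t ≤ w t := by
    apply le_of_deriv_le' hTT hz hw (by rw [hz0, hw0])
    exact hzineq
  -- v := η + ∫ g
  set v : ℝ → ℝ := fun t => η + ∫ s in (0:ℝ)..t, g s with hvdef
  have hv : ∀ t ∈ Icc 0 T, HasDerivWithinAt v (g t) (Icc 0 T) t := by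
    intro t ht
    have h := (hasDerivWithinAt_const t _ η).add (ftc_icc' hgcont ht)
    rw [zero_add] at h
    exact h
  have hηpos : 0 < η := by
    rw [hη]
    have := integral_nonneg_icc' hδnonneg (right_mem_Icc.2 hTT)
    linarith
  have hvpos : ∀ t ∈ Icc 0 T, 0 < v t := by
    intro t ht
    have := integral_nonneg_icc' hgnn ht
    simp only [hvdef]; linarith
  have hwv : ∀ t ∈ Icc 0 T, w t ≤ v t := by
    intro t ht
    have hsplit : (∫ s in (0:ℝ)..t, (δ s + g s)) =
        (∫ s in (0:ℝ)..t, δ s) + ∫ s in (0:ℝ)..t, g s :=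
      intervalIntegral.integral_add (ii_sub' hδcont h0T ht ht.1) (ii_sub' hgcont h0T ht ht.1)
    have hδle : (∫ s in (0:ℝ)..t, δ s) ≤ ∫ s in (0:ℝ)..T, δ s :=
      integral_le_integral' hδcont hδnonneg ht
    simp only [hwdef, hvdef, hsplit, hη]
    linarith
  have hzv : ∀ t ∈ Icc 0 T, z t ≤ v t := fun t ht => (hzw t ht).trans (hwv t ht)
  have hv0 : v 0 = η := by simp [hvdef]
  -- g t ≤ α K v t ^ n
  have hgv : ∀ t ∈ Icc 0 T, g t ≤ α * K * v t ^ n := by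
    intro t ht
    exact mul_le_mul_of_nonneg_left
      (Real.rpow_le_rpow (hzpos t ht).le (hzv t ht) (by linarith)) (by positivity)
  set c : ℝ := (n - 1) * α * K with hcdef
  have hcpos : 0 < c := by positivity
  -- ψ := v^(1-n) + c t is monotone
  set ψ : ℝ → ℝ := fun t => v t ^ (1 - n) + c * t with hψdef
  have hψ : ∀ t ∈ Icc 0 T,
      HasDerivWithinAt ψ (g t * (1 - n) * v t ^ (1 - n - 1) + c) (Icc 0 T) t := by
    intro t ht
    have h1 := (hv t ht).rpow_const (Or.inl (hvpos t ht).ne') (p := 1 - n)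
    have h2 : HasDerivWithinAt (fun s => c * s) c (Icc 0 T) t := by
      simpa using (hasDerivWithinAt_id t (Icc 0 T)).const_mul c
    exact h1.add h2
  have hψmono : MonotoneOn ψ (Icc 0 T) := by
    apply monotoneOn_of_deriv_nonneg (convex_Icc 0 T)
    · exact fun t ht => (hψ t ht).continuousWithinAt
    · intro x hx
      rw [interior_Icc] at hx
      exact ((hψ x (Ioo_subset_Icc_self hx)).hasDerivAt
        (Icc_mem_nhds hx.1 hx.2)).differentiableAt.differentiableWithinAt
    · intro x hx
      rw [interior_Icc] at hx
      have hx' := Ioo_subset_Icc_self hx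
      rw [((hψ x hx').hasDerivAt (Icc_mem_nhds hx.1 hx.2)).deriv]
      have hvx := hvpos x hx'
      have hvn : (0:ℝ) < v x ^ (1 - n - 1) := Real.rpow_pos_of_pos hvx _
      have hvv : v x ^ n * v x ^ (1 - n - 1) = 1 := by
        rw [← Real.rpow_add hvx, show n + (1 - n - 1) = (0:ℝ) by ring, Real.rpow_zero]
      have hm : (1 - n) * v x ^ (1 - n - 1) ≤ 0 :=
        mul_nonpos_of_nonpos_of_nonneg (by linarith) hvn.le
      have h5 := mul_le_mul_of_nonpos_right (hgv x hx') hm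
      have h6 : (α * K * v x ^ n) * ((1 - n) * v x ^ (1 - n - 1)) = (1 - n) * α * K := by
        linear_combination ((1 - n) * α * K) * hvv
      rw [h6] at h5
      rw [hcdef]
      nlinarith [h5]
  -- lower bound on v t ^ (1-n)
  have hψbound : ∀ t ∈ Icc 0 T, η ^ (1 - n) - c * T ≤ v t ^ (1 - n) := by
    intro t ht
    have h1 := hψmono h0T ht ht.1
    have h2 : c * t ≤ c * T := mul_le_mul_of_nonneg_left ht.2 hcpos.le
    simp only [hψdef, hv0, mul_zero, add_zero] at h1
    linarith
  -- positivity of D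
  set D : ℝ := 1 - c * T * η ^ (n - 1) with hDdef
  have hsmall' : η ^ (n - 1) < 1 / ((n - 1) * α * T) * Real.exp (-((n - 1) * β)) := by
    have hbase : (0:ℝ) < 1 / ((n - 1) * α * T) := by positivity
    have := Real.rpow_lt_rpow hηpos.le hsmall hn1
    rwa [Real.mul_rpow (by positivity) (Real.exp_pos _).le, ← Real.rpow_mul hbase.le,
      one_div_mul_cancel hn1.ne', Real.rpow_one, ← Real.exp_mul,
      show -β * (n - 1) = -((n - 1) * β) by ring] at this
  have hDpos : 0 < D := by
    have h1 : (0:ℝ) < (n - 1) * α * T := by positivity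
    have h3 : (n - 1) * α * T * η ^ (n - 1) < Real.exp (-((n - 1) * β)) := by
      calc (n - 1) * α * T * η ^ (n - 1)
          < (n - 1) * α * T * (1 / ((n - 1) * α * T) * Real.exp (-((n - 1) * β))) :=
            mul_lt_mul_of_pos_left hsmall' h1
        _ = Real.exp (-((n - 1) * β)) := by field_simp
    have h4 : Real.exp ((n - 1) * β) * ((n - 1) * α * T * η ^ (n - 1))
        < Real.exp ((n - 1) * β) * Real.exp (-((n - 1) * β)) :=
      mul_lt_mul_of_pos_left h3 (Real.exp_pos _)
    rw [← Real.exp_add, add_neg_cancel, Real.exp_zero] at h4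
    rw [hDdef, hcdef, hKdef]
    nlinarith [h4]
  have hD' : η ^ (1 - n) - c * T = η ^ (1 - n) * D := by
    have hone : η ^ (1 - n) * η ^ (n - 1) = 1 := by
      rw [← Real.rpow_add hηpos, show (1 - n) + (n - 1) = (0:ℝ) by ring, Real.rpow_zero]
    rw [hDdef]
    linear_combination (c * T) * hone
  -- final bound
  intro t ht
  set M : ℝ := η * (D ^ (1 / (n - 1)))⁻¹ with hMdef
  have hDr : (0:ℝ) < D ^ (1 / (n - 1)) := Real.rpow_pos_of_pos hDpos _
  have hMpos : 0 < M := by positivity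
  have hM1n : M ^ (1 - n) = η ^ (1 - n) * D := by
    have e1 : ((D ^ (1 / (n - 1)))⁻¹ : ℝ) = D ^ (-(1 / (n - 1))) :=
      (Real.rpow_neg hDpos.le _).symm
    rw [hMdef, e1, Real.mul_rpow hηpos.le (Real.rpow_pos_of_pos hDpos _).le,
      ← Real.rpow_mul hDpos.le]
    congr 1
    rw [show -(1 / (n - 1)) * (1 - n) = 1 by field_simp; ring, Real.rpow_one]
  have hvM : v t ≤ M := by
    by_contra h
    push_neg at h
    have hlt := Real.rpow_lt_rpow_of_neg hMpos h (by linarith : 1 - n < 0)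
    have hb := hψbound t ht
    rw [hD', ← hM1n] at hb
    linarith
  have hyz : y t = z t * Real.exp (A t) := by
    simp only [hzdef]
    rw [mul_assoc, ← Real.exp_add, neg_add_cancel, Real.exp_zero, mul_one]
  calc y t = z t * Real.exp (A t) := hyz
    _ ≤ v t * Real.exp (A t) :=
        mul_le_mul_of_nonneg_right (hzv t ht) (Real.exp_pos _).le
    _ ≤ v t * Real.exp β :=
        mul_le_mul_of_nonneg_left (Real.exp_le_exp.2 (hAle t ht)) (hvpos t ht).le
    _ ≤ M * Real.exp β :=
        mul_le_mul_of_nonneg_right hvM (Real.exp_pos _).le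
    _ = Real.exp β * η / D ^ (1 / (n - 1)) := by rw [hMdef]; ring
end

section
/- Let T > 0, α > 0 and n > 1 be real constants and let a : [0,T] → ℝ be continuous and nonnegative. For each m ∈ ℕ let δ_m : [0,T] → ℝ be continuous and nonnegative and let y_m : [0,T] → ℝ be differentiable, nonnegative on [0,T], with y_m'(t) ≤ a(t)·y_m(t) + α·y_m(t)^n + δ_m(t) for all t ∈ [0,T] (where the power y_m^n is interpreted as 0 when y_m = 0). If y_m(0) + ∫₀^T δ_m(s) ds → 0 as m → ∞, then sup_{t ∈ [0,T]} y_m(t) → 0 as m → ∞, i.e. y_m converges to 0 uniformly on [0,T]. -/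
open Real Set Filter

/-- Sequential form of the ODE lemma used for convergence of Galerkin approximations:
if each `y m` is nonnegative and satisfies `y_m' ≤ a(t) y_m + α y_m^n + δ_m(t)` on `[0,T]`
(with `y_m ^ n` the real power, equal to `0` at `y_m = 0`), and
`y_m(0) + ∫₀ᵀ δ_m → 0`, then `y_m → 0` uniformly on `[0,T]`. -/
theorem ode_lemma_sequential_uniform_convergence
    (T α n : ℝ) (hT : 0 < T) (hα : 0 < α) (hn : 1 < n)
    (a : ℝ → ℝ)
    (hacont : ContinuousOn a (Icc 0 T))
    (hanonneg : ∀ t ∈ Icc 0 T, 0 ≤ a t)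
    (δ : ℕ → ℝ → ℝ) (y : ℕ → ℝ → ℝ) (y' : ℕ → ℝ → ℝ)
    (hδcont : ∀ m, ContinuousOn (δ m) (Icc 0 T))
    (hδnonneg : ∀ m, ∀ t ∈ Icc 0 T, 0 ≤ δ m t)
    (hyderiv : ∀ m, ∀ t ∈ Icc 0 T, HasDerivWithinAt (y m) (y' m t) (Icc 0 T) t)
    (hynonneg : ∀ m, ∀ t ∈ Icc 0 T, 0 ≤ y m t)
    (hineq : ∀ m, ∀ t ∈ Icc 0 T,
      y' m t ≤ a t * y m t + α * y m t ^ n + δ m t)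
    (htend : Tendsto (fun m => y m 0 + ∫ s in (0:ℝ)..T, δ m s) atTop (nhds 0)) :
    TendstoUniformlyOn y 0 atTop (Icc 0 T) := by
  have hT0 : (0:ℝ) ≤ T := hT.le
  set proj : ℝ → ℝ := fun t => max 0 (min t T) with hproj
  have hprojc : Continuous proj := continuous_const.max (continuous_id.min continuous_const)
  have hprojmem : ∀ t, proj t ∈ Icc 0 T := fun t =>
    ⟨le_max_left _ _, max_le hT0 (min_le_right _ _)⟩
  have hprojeq : ∀ t ∈ Icc 0 T, proj t = t := fun t ht => by
    simp only [hproj]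
    rw [min_eq_left ht.2, max_eq_right ht.1]
  -- maximum of `a`
  obtain ⟨x₀, hx₀, hx₀max'⟩ := isCompact_Icc.exists_isMaxOn (nonempty_Icc.2 hT0) hacont
  have hx₀max : ∀ t ∈ Icc 0 T, a t ≤ a x₀ := fun t ht => hx₀max' ht
  set Amax := max (a x₀) 0 with hAm
  have hAmax : ∀ t ∈ Icc 0 T, a t ≤ Amax := fun t ht => (hx₀max t ht).trans (le_max_left _ _)
  have hAmax0 : 0 ≤ Amax := le_max_right _ _
  set K := Amax + α with hKdef
  have hK0 : 0 ≤ K := add_nonneg hAmax0 hα.le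
  set C := exp (K * T) with hCdef
  have hC1 : 1 ≤ C := one_le_exp (mul_nonneg hK0 hT0)
  have hC0 : 0 < C := exp_pos _
  -- the key a priori estimate
  have key : ∀ m, (y m 0 + ∫ s in (0:ℝ)..T, δ m s) * C < 1 →
      ∀ t ∈ Icc 0 T, y m t ≤ (y m 0 + ∫ s in (0:ℝ)..T, δ m s) * C := by
    intro m hεC
    set ε := y m 0 + ∫ s in (0:ℝ)..T, δ m s with hεdef
    have hε0 : 0 ≤ ε := add_nonneg (hynonneg m 0 ⟨le_rfl, hT0⟩)
      (intervalIntegral.integral_nonneg hT0 (fun s hs => hδnonneg m s hs))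
    set Δ : ℝ → ℝ := fun t => δ m (proj t) with hΔdef
    have hΔc : Continuous Δ := by
      rw [← continuousOn_univ]
      exact (hδcont m).comp hprojc.continuousOn (fun t _ => hprojmem t)
    have hΔeq : ∀ t ∈ Icc 0 T, Δ t = δ m t := fun t ht => by
      simp only [hΔdef]; rw [hprojeq t ht]
    have hΔ0 : ∀ t, 0 ≤ Δ t := fun t => hδnonneg m _ (hprojmem t)
    set D : ℝ → ℝ := fun t => ∫ s in (0:ℝ)..t, Δ s with hDdef
    have hDderiv : ∀ t, HasDerivAt D (Δ t) t := fun t =>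
      (hΔc.integral_hasStrictDerivAt 0 t).hasDerivAt
    have hDT : D T = ∫ s in (0:ℝ)..T, δ m s := by
      apply intervalIntegral.integral_congr
      intro s hs
      exact hΔeq s (by rwa [uIcc_of_le hT0] at hs)
    set u : ℝ → ℝ := fun t => y m t + (D T - D t) with hudef
    have hyc : ContinuousOn (y m) (Icc 0 T) := fun t ht =>
      (hyderiv m t ht).continuousWithinAt
    have hDc : Continuous D := by
      rw [continuous_iff_continuousAt]; exact fun t => (hDderiv t).continuousAt
    have huc : ContinuousOn u (Icc 0 T) :=
      hyc.add (continuousOn_const.sub hDc.continuousOn)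
    have hu0 : u 0 = ε := by
      simp only [hudef, hεdef, hDdef]
      rw [intervalIntegral.integral_same]
      have h7 : (∫ s in (0:ℝ)..T, Δ s) = ∫ s in (0:ℝ)..T, δ m s := hDT
      rw [h7]; ring
    have hyleu : ∀ t ∈ Icc 0 T, y m t ≤ u t := by
      intro t ht
      have hint : D T - D t = ∫ s in t..T, Δ s := by
        have h1 : IntervalIntegrable Δ MeasureTheory.volume 0 t := hΔc.intervalIntegrable _ _
        have h2 : IntervalIntegrable Δ MeasureTheory.volume t T := hΔc.intervalIntegrable _ _
        rw [hDdef]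
        simp only []
        rw [← intervalIntegral.integral_add_adjacent_intervals h1 h2]
        ring
      have : 0 ≤ D T - D t := by
        rw [hint]
        exact intervalIntegral.integral_nonneg ht.2 (fun s _ => hΔ0 s)
      simp only [hudef]; linarith
    have hu0le : ∀ t ∈ Icc 0 T, 0 ≤ u t := fun t ht =>
      le_trans (hynonneg m t ht) (hyleu t ht)
    -- derivative of u within Ici t
    have huderiv : ∀ t ∈ Ico 0 T, HasDerivWithinAt u (y' m t - Δ t) (Ici t) t := by
      intro t ht
      have h1 : HasDerivWithinAt u (y' m t + (0 - Δ t)) (Icc 0 T) t :=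
        (hyderiv m t ⟨ht.1, ht.2.le⟩).add
          ((hasDerivWithinAt_const _ _ _).sub (hDderiv t).hasDerivWithinAt)
      have h2 : Icc 0 T ∈ nhdsWithin t (Ici t) := by
        have h3 : Iic T ∈ nhds t := Iic_mem_nhds ht.2
        have h4 : Iic T ∩ Ici t ∈ nhdsWithin t (Ici t) :=
          Filter.inter_mem (mem_nhdsWithin_of_mem_nhds h3) self_mem_nhdsWithin
        exact mem_of_superset h4 (fun x hx => ⟨ht.1.trans hx.2, hx.1⟩)
      have := h1.mono_of_mem_nhdsWithin h2
      rw [show y' m t - Δ t = y' m t + (0 - Δ t) by ring]; exact this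
    -- Gronwall on subintervals where u ≤ 1
    have gron : ∀ b ∈ Icc 0 T, (∀ x ∈ Ico 0 b, u x ≤ 1) →
        ∀ t ∈ Icc 0 b, u t ≤ ε * exp (K * t) := by
      intro b hb hsmall t htb
      have hbd : ∀ x ∈ Ico (0:ℝ) b, y' m x - Δ x ≤ K * u x + 0 := by
        intro x hx
        have hxT : x ∈ Icc 0 T := ⟨hx.1, hx.2.le.trans hb.2⟩
        have h1 : y' m x ≤ a x * y m x + α * y m x ^ n + δ m x := hineq m x hxT
        have h2 : a x * y m x ≤ Amax * u x :=
          le_trans (mul_le_mul_of_nonneg_right (hAmax x hxT) (hynonneg m x hxT))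
            (mul_le_mul_of_nonneg_left (hyleu x hxT) hAmax0)
        have h3 : y m x ^ n ≤ u x ^ n :=
          Real.rpow_le_rpow (hynonneg m x hxT) (hyleu x hxT)
            (le_trans zero_le_one hn.le)
        have h4 : u x ^ n ≤ u x := by
          rcases eq_or_lt_of_le (hu0le x hxT) with h | h
          · rw [← h, Real.zero_rpow (by positivity)]
          · calc u x ^ n ≤ u x ^ (1:ℝ) :=
                  Real.rpow_le_rpow_of_exponent_ge h (hsmall x hx) hn.le
              _ = u x := Real.rpow_one _
        have h5 : α * y m x ^ n ≤ α * u x :=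
          mul_le_mul_of_nonneg_left (h3.trans h4) hα.le
        have h6 : Δ x = δ m x := hΔeq x hxT
        rw [hKdef]
        nlinarith
      have := le_gronwallBound_of_liminf_deriv_right_le
        (f := u) (f' := fun x => y' m x - Δ x) (δ := ε) (K := K) (ε := 0)
        (a := 0) (b := b)
        (huc.mono (Icc_subset_Icc le_rfl hb.2))
        (fun x hx r hr => by
          have hxIco : x ∈ Ico 0 T := ⟨hx.1, lt_of_lt_of_le hx.2 hb.2⟩
          simpa [slope_def_field, div_eq_inv_mul] using
            (huderiv x hxIco).liminf_right_slope_le hr)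
        (le_of_eq hu0) hbd t htb
      rwa [gronwallBound_ε0, sub_zero] at this
    -- u < 1 everywhere on [0,T]
    have hεC' : ε * C < 1 := hεC
    have hult : ∀ t ∈ Icc 0 T, u t ≤ 1 := by
      by_contra hcon
      push_neg at hcon
      obtain ⟨t₁, ht₁, ht₁gt⟩ := hcon
      set S := {t ∈ Icc 0 T | 1 ≤ u t} with hS
      have hSne : S.Nonempty := ⟨t₁, ht₁, ht₁gt.le⟩
      have hSclosed : IsClosed S := by
        have h8 := huc.preimage_isClosed_of_isClosed isClosed_Icc (isClosed_Ici (a := (1:ℝ)))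
        have hset : S = Icc 0 T ∩ u ⁻¹' Ici 1 := by ext x; simp [hS]
        rw [hset]; exact h8
      have hScompact : IsCompact S :=
        isCompact_Icc.of_isClosed_subset hSclosed (fun x hx => hx.1)
      obtain ⟨ts, htsS, htsle⟩ := hScompact.exists_isLeast hSne
      have hts01 : ts ∈ Icc 0 T := htsS.1
      have hsmall : ∀ x ∈ Ico 0 ts, u x ≤ 1 := by
        intro x hx
        by_contra hx1
        push_neg at hx1
        exact absurd (htsle ⟨⟨hx.1, hx.2.le.trans hts01.2⟩, hx1.le⟩) (not_le.2 hx.2)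
      have := gron ts hts01 hsmall ts ⟨hts01.1, le_rfl⟩
      have hexp : exp (K * ts) ≤ C := by
        rw [hCdef]
        exact exp_le_exp.2 (mul_le_mul_of_nonneg_left hts01.2 hK0)
      have : u ts ≤ ε * C := this.trans (mul_le_mul_of_nonneg_left hexp hε0)
      linarith [htsS.2]
    -- final estimate
    intro t ht
    have h1 : ∀ x ∈ Ico 0 T, u x ≤ 1 := fun x hx => hult x ⟨hx.1, hx.2.le⟩
    have h2 := gron T ⟨hT0, le_rfl⟩ h1 t ht
    have hexp : exp (K * t) ≤ C := by
      rw [hCdef]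
      exact exp_le_exp.2 (mul_le_mul_of_nonneg_left ht.2 hK0)
    calc y m t ≤ u t := hyleu t ht
      _ ≤ ε * exp (K * t) := h2
      _ ≤ ε * C := mul_le_mul_of_nonneg_left hexp hε0
  -- conclude uniform convergence
  rw [Metric.tendstoUniformlyOn_iff]
  intro η hη
  have hpos : 0 < min η 1 / C := div_pos (lt_min hη one_pos) hC0
  have hev : ∀ᶠ m in atTop, (y m 0 + ∫ s in (0:ℝ)..T, δ m s) < min η 1 / C :=
    htend.eventually_lt_const hpos
  filter_upwards [hev] with m hm t ht
  have hεC : (y m 0 + ∫ s in (0:ℝ)..T, δ m s) * C < min η 1 := by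
    rw [← div_mul_cancel₀ (min η 1) hC0.ne']
    exact mul_lt_mul_of_pos_right hm hC0
  have h1 : (y m 0 + ∫ s in (0:ℝ)..T, δ m s) * C < 1 := hεC.trans_le (min_le_right _ _)
  have h2 := key m h1 t ht
  have h3 : y m t < η := lt_of_le_of_lt h2 (hεC.trans_le (min_le_left _ _))
  have h4 : 0 ≤ y m t := hynonneg m t ht
  simp only [Pi.zero_apply, Real.dist_eq, zero_sub, abs_neg, abs_of_nonneg h4]
  exact h3
end
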